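/- arXiv:2108.04438 — 6 statements merged into one kernel-verified Lean document; each statement's English description precedes it below -/
import Mathlib

section
/- For every T ∈ ℕ and every x ∈ (ℂ∖{0})^d, the matrix-valued generating function of the amplitudes satisfies Σ_{k∈ℤ^d} A_T(k) · x^k = M(x)^T, where x^k = Π_{m=1}^d x_m^{k_m} and the sum has only finitely many nonzero terms. -/
open scoped InnerProductSpace

noncomputable section

/-- The Hilbert space `ℓ²(ℤ^d × Fin c, ℂ)` of the quantum random walk. -/
abbrev QRW.Space (d c : ℕ) : Type :=
  lp (fun _ : (Fin d → ℤ) × Fin c => ℂ) 2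

/-- The standard orthonormal basis vector `δ_{(k,i)}`. -/
noncomputable def QRW.delta {d c : ℕ} (k : Fin d → ℤ) (i : Fin c) : QRW.Space d c :=
  lp.single 2 (k, i) 1

namespace QRWAux

variable {d c : ℕ}

/-- Recursively defined amplitude matrices. -/
noncomputable def B (U : Matrix (Fin c) (Fin c) ℂ) (j : Fin c → (Fin d → ℤ)) :
    ℕ → (Fin d → ℤ) → Matrix (Fin c) (Fin c) ℂ
  | 0, k => if k = 0 then 1 else 0
  | T + 1, k => ∑ v : Fin c, Matrix.single v v 1 * U * B U j T (k - j v)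

/-- Finite set containing the support of `B · · T`. -/
def suppF (j : Fin c → (Fin d → ℤ)) (T : ℕ) : Finset (Fin d → ℤ) :=
  (Finset.univ : Finset (Fin T → Fin c)).image fun f => ∑ t, j (f t)

lemma zero_mem_suppF (j : Fin c → (Fin d → ℤ)) : (0 : Fin d → ℤ) ∈ suppF j 0 := by
  simp only [suppF, Finset.mem_image, Finset.mem_univ, true_and]
  exact ⟨Fin.elim0, by simp⟩

lemma add_mem_suppF (j : Fin c → (Fin d → ℤ)) {T : ℕ} {a : Fin d → ℤ}
    (ha : a ∈ suppF j T) (v : Fin c) : a + j v ∈ suppF j (T + 1) := by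
  simp only [suppF, Finset.mem_image, Finset.mem_univ, true_and] at ha ⊢
  obtain ⟨f, rfl⟩ := ha
  exact ⟨Fin.snoc f v, by rw [Fin.sum_univ_castSucc]; simp⟩

lemma B_support (U : Matrix (Fin c) (Fin c) ℂ) (j : Fin c → (Fin d → ℤ)) :
    ∀ (T : ℕ) (k : Fin d → ℤ), k ∉ suppF j T → B U j T k = 0
  | 0, k, hk => by
      rw [B, if_neg]
      rintro rfl
      exact hk (zero_mem_suppF j)
  | T + 1, k, hk => by
      rw [B]
      refine Finset.sum_eq_zero fun v _ => ?_
      have h1 : k - j v ∉ suppF j T := by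
        intro h
        exact hk (by simpa using add_mem_suppF j h v)
      rw [B_support U j T _ h1, mul_zero]

lemma B_succ_apply (U : Matrix (Fin c) (Fin c) ℂ) (j : Fin c → (Fin d → ℤ))
    (T : ℕ) (k : Fin d → ℤ) (v u : Fin c) :
    B U j (T + 1) k v u = ∑ w, U v w * B U j T (k - j v) w u := by
  rw [B, Matrix.sum_apply]
  rw [Finset.sum_eq_single v]
  · simp only [Matrix.mul_apply, Matrix.single, Matrix.of_apply, ite_and]
    simp [Finset.mul_sum]
  · intro b _ hb
    simp only [Matrix.mul_apply, Matrix.single, Matrix.of_apply, ite_and]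
    simp [Ne.symm hb, hb]
  · simp

lemma sum_smul_stdBasisMatrix (t : Fin c → ℂ) :
    ∑ v : Fin c, t v • Matrix.single v v (1 : ℂ) = Matrix.diagonal t := by
  ext a b
  simp [Matrix.sum_apply, Matrix.single, Matrix.diagonal, Matrix.of_apply, ite_and,
    Finset.sum_ite_eq, eq_comm]

lemma gen (U : Matrix (Fin c) (Fin c) ℂ) (j : Fin c → (Fin d → ℤ))
    (x : Fin d → ℂ) (hx : ∀ m, x m ≠ 0) (T : ℕ) :
    ∑' k : Fin d → ℤ, (∏ m : Fin d, x m ^ k m) • B U j T k =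
      (Matrix.diagonal (fun l : Fin c => ∏ m : Fin d, x m ^ j l m) * U) ^ T := by
  induction T with
  | zero =>
    rw [tsum_eq_sum (s := {0}) (fun k hk => ?_)]
    · simp [B]
    · simp only [Finset.mem_singleton] at hk
      simp [B, hk]
  | succ T ih =>
    set M := Matrix.diagonal (fun l : Fin c => ∏ m : Fin d, x m ^ j l m) * U with hM
    have hsumm : ∀ v : Fin c, Summable (fun k : Fin d → ℤ =>
        (∏ m : Fin d, x m ^ k m) • (Matrix.single v v (1 : ℂ) * U * B U j T (k - j v))) := by
      intro v
      apply summable_of_ne_finset_zero (s := (suppF j T).image (· + j v))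
      intro k hk
      have h1 : k - j v ∉ suppF j T := fun h =>
        hk (Finset.mem_image.2 ⟨_, h, sub_add_cancel k (j v)⟩)
      rw [B_support U j T _ h1, mul_zero, smul_zero]
    calc ∑' k : Fin d → ℤ, (∏ m : Fin d, x m ^ k m) • B U j (T + 1) k
        = ∑' k : Fin d → ℤ, ∑ v : Fin c,
            (∏ m : Fin d, x m ^ k m) • (Matrix.single v v (1 : ℂ) * U * B U j T (k - j v)) := by
          refine tsum_congr fun k => ?_
          rw [B, Finset.smul_sum]
      _ = ∑ v : Fin c, ∑' k : Fin d → ℤ,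
            (∏ m : Fin d, x m ^ k m) • (Matrix.single v v (1 : ℂ) * U * B U j T (k - j v)) :=
          Summable.tsum_finsetSum fun v _ => hsumm v
      _ = ∑ v : Fin c, (∏ m : Fin d, x m ^ j v m) • (Matrix.single v v (1 : ℂ) * U * M ^ T) := by
          refine Finset.sum_congr rfl fun v _ => ?_
          rw [← Equiv.tsum_eq (Equiv.addRight (j v))]
          have h1 : ∀ k : Fin d → ℤ,
              (∏ m : Fin d, x m ^ (Equiv.addRight (j v) k) m) •
                (Matrix.single v v (1 : ℂ) * U * B U j T (Equiv.addRight (j v) k - j v))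
              = (∏ m : Fin d, x m ^ j v m) •
                (Matrix.single v v (1 : ℂ) * U * ((∏ m : Fin d, x m ^ k m) • B U j T k)) := by
            intro k
            have hk : Equiv.addRight (j v) k = k + j v := rfl
            rw [hk, add_sub_cancel_right, Matrix.mul_smul, smul_smul]
            congr 1
            rw [← Finset.prod_mul_distrib]
            refine Finset.prod_congr rfl fun m _ => ?_
            rw [Pi.add_apply, zpow_add₀ (hx m), mul_comm]
          simp_rw [h1]
          rw [tsum_eq_sum (s := suppF j T) (fun k hk => by
            rw [B_support U j T _ hk, smul_zero, mul_zero, smul_zero])]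
          rw [← Finset.smul_sum, ← Finset.mul_sum,
            ← tsum_eq_sum (L := SummationFilter.unconditional _) (s := suppF j T) (fun k hk => by rw [B_support U j T _ hk, smul_zero]), ih]
      _ = (∑ v : Fin c, (∏ m : Fin d, x m ^ j v m) • Matrix.single v v (1 : ℂ)) * U * M ^ T := by
          rw [Finset.sum_mul, Finset.sum_mul]
          refine Finset.sum_congr rfl fun v _ => ?_
          rw [smul_mul_assoc, smul_mul_assoc]
      _ = M ^ (T + 1) := by
          rw [sum_smul_stdBasisMatrix, ← hM, pow_succ']

lemma state (U : Matrix (Fin c) (Fin c) ℂ) (j : Fin c → (Fin d → ℤ))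
    (S₁ S₂ : QRW.Space d c →L[ℂ] QRW.Space d c)
    (hS₁ : ∀ (k : Fin d → ℤ) (i : Fin c),
      S₁ (QRW.delta k i) = ∑ i' : Fin c, U i' i • QRW.delta k i')
    (hS₂ : ∀ (k : Fin d → ℤ) (i : Fin c),
      S₂ (QRW.delta k i) = QRW.delta (k + j i) i)
    (T : ℕ) (u : Fin c) :
    ((S₂ ∘L S₁) ^ T) (QRW.delta (0 : Fin d → ℤ) u) =
      ∑ k ∈ suppF j T, ∑ w : Fin c, B U j T k w u • QRW.delta k w := by
  induction T with
  | zero =>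
    have h0 : suppF j 0 = {0} := by
      refine Finset.eq_singleton_iff_unique_mem.2 ⟨zero_mem_suppF j, fun a ha => ?_⟩
      simp only [suppF, Finset.mem_image, Finset.mem_univ, true_and] at ha
      obtain ⟨f, rfl⟩ := ha
      simp
    rw [pow_zero, h0, Finset.sum_singleton]
    rw [show (B U j 0 0 : Matrix (Fin c) (Fin c) ℂ) = 1 from by rw [B, if_pos rfl]]
    simp [Matrix.one_apply]
  | succ T ih =>
    have hstep : ∀ (k : Fin d → ℤ) (w : Fin c),
        (S₂ ∘L S₁) (QRW.delta k w) = ∑ v : Fin c, U v w • QRW.delta (k + j v) v := by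
      intro k w
      rw [ContinuousLinearMap.comp_apply, hS₁, map_sum]
      exact Finset.sum_congr rfl fun v _ => by rw [map_smul, hS₂]
    rw [pow_succ', ContinuousLinearMap.mul_apply, ih, map_sum]
    have h2 : ∀ k, (S₂ ∘L S₁) (∑ w : Fin c, B U j T k w u • QRW.delta k w)
        = ∑ v : Fin c, (∑ w : Fin c, U v w * B U j T k w u) • QRW.delta (k + j v) v := by
      intro k
      rw [map_sum]
      rw [Finset.sum_congr rfl fun w _ => by rw [map_smul, hstep k w, Finset.smul_sum]]
      rw [Finset.sum_comm]
      refine Finset.sum_congr rfl fun v _ => ?_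
      rw [Finset.sum_smul]
      exact Finset.sum_congr rfl fun w _ => by rw [smul_smul, mul_comm]
    simp_rw [h2]
    rw [Finset.sum_comm]
    conv_rhs => rw [Finset.sum_comm]
    refine Finset.sum_congr rfl fun v _ => ?_
    have himg : (suppF j T).image (· + j v) ⊆ suppF j (T + 1) := by
      intro k' hk'
      obtain ⟨k, hk, rfl⟩ := Finset.mem_image.1 hk'
      exact add_mem_suppF j hk v
    rw [← Finset.sum_subset himg (fun k' h1 h2 => ?_)]
    · rw [Finset.sum_image (fun a _ b _ h => by simpa using h)]
      refine Finset.sum_congr rfl fun k hk => ?_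
      rw [B_succ_apply, add_sub_cancel_right]
    · have h3 : k' - j v ∉ suppF j T := fun h =>
        h2 (Finset.mem_image.2 ⟨_, h, sub_add_cancel k' (j v)⟩)
      rw [B_succ_apply, B_support U j T _ h3]
      simp

end QRWAux

/-- The generating function of the amplitudes of the walk `S = S₂ ∘ S₁` satisfies
`∑_k A_T(k) x^k = M(x)^T` where `M(x) = Δ(x)·U`, the sum having finitely many
nonzero terms. -/
theorem qrw_generating_function (d c : ℕ) (hd : 1 ≤ d) (hc : 1 ≤ c)
    (U : Matrix (Fin c) (Fin c) ℂ) (hU : U ∈ Matrix.unitaryGroup (Fin c) ℂ)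
    (j : Fin c → (Fin d → ℤ))
    (S₁ S₂ : QRW.Space d c →L[ℂ] QRW.Space d c)
    (hS₁ : ∀ (k : Fin d → ℤ) (i : Fin c),
      S₁ (QRW.delta k i) = ∑ i' : Fin c, U i' i • QRW.delta k i')
    (hS₂ : ∀ (k : Fin d → ℤ) (i : Fin c),
      S₂ (QRW.delta k i) = QRW.delta (k + j i) i)
    (A : ℕ → (Fin d → ℤ) → Matrix (Fin c) (Fin c) ℂ)
    (hA : ∀ (T : ℕ) (k : Fin d → ℤ), A T k = Matrix.of fun v u : Fin c =>
      ⟪QRW.delta k v, ((S₂ ∘L S₁) ^ T) (QRW.delta (0 : Fin d → ℤ) u)⟫_ℂ)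
    (T : ℕ) (x : Fin d → ℂ) (hx : ∀ m, x m ≠ 0) :
    {k : Fin d → ℤ | A T k ≠ 0}.Finite ∧
    ∑' k : Fin d → ℤ, (∏ m : Fin d, x m ^ k m) • A T k =
      (Matrix.diagonal (fun l : Fin c => ∏ m : Fin d, x m ^ j l m) * U) ^ T := by
  have hAB : ∀ k, A T k = QRWAux.B U j T k := by
    intro k
    rw [hA]
    ext v u
    rw [Matrix.of_apply, QRWAux.state U j S₁ S₂ hS₁ hS₂ T u]
    have horth : ∀ (k' : Fin d → ℤ) (w : Fin c),
        (⟪QRW.delta k v, QRW.delta k' w⟫_ℂ) = if k' = k ∧ w = v then 1 else 0 := by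
      intro k' w
      rw [QRW.delta, QRW.delta, lp.inner_single_left]
      rcases eq_or_ne ((k, v) : (Fin d → ℤ) × Fin c) (k', w) with h | h
      · obtain ⟨rfl, rfl⟩ : k = k' ∧ v = w := by simpa [Prod.ext_iff] using h
        rw [lp.single_apply_self]
        simp
      · rw [lp.single_apply_ne 2 _ _ h, inner_zero_right, if_neg]
        rintro ⟨rfl, rfl⟩
        exact h rfl
    simp_rw [inner_sum, inner_smul_right, horth, mul_ite, mul_one, mul_zero]
    have hsum1 : ∀ k', (∑ w : Fin c, if k' = k ∧ w = v then QRWAux.B U j T k' w u else 0)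
        = if k' = k then QRWAux.B U j T k' v u else 0 := by
      intro k'
      by_cases h : k' = k
      · simp [h]
      · simp [h]
    simp_rw [hsum1]
    rw [Finset.sum_ite_eq' (QRWAux.suppF j T) k fun k' => QRWAux.B U j T k' v u]
    by_cases h : k ∈ QRWAux.suppF j T
    · rw [if_pos h]
    · rw [if_neg h, QRWAux.B_support U j T k h]
      rfl
  constructor
  · refine Set.Finite.subset (QRWAux.suppF j T).finite_toSet fun k hk => ?_
    simp only [Set.mem_setOf_eq, hAB] at hk
    by_contra h
    exact hk (QRWAux.B_support U j T k h)
  · simp_rw [hAB]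
    exact QRWAux.gen U j x hx T

end
end

section
/- Derivative of an eigenvalue branch along a curve on the spectral surface: let ε > 0 and let ξ : (−ε, ε) → ℝ^d, ζ : (−ε, ε) → ℝ and v : (−ε, ε) → ℂ^c be differentiable maps such that ‖v(t)‖ = 1 and M(e^{iξ(t)}) v(t) = e^{iζ(t)} v(t) for all t (where e^{iξ} denotes (e^{iξ_1}, …, e^{iξ_d})). Then ζ'(0) = ⟨Δ(ξ'(0)) v(0), v(0)⟩ = Σ_{l∈Fin c} ⟨ξ'(0), j(l)⟩ · |v_l(0)|², where Δ(ξ'(0)) is the diagonal c×c matrix with entries Δ(ξ'(0))_{l,l} = ⟨ξ'(0), j(l)⟩ = Σ_{m=1}^d ξ'(0)_m j(l)_m. -/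
noncomputable section

/-- Derivative of an eigenvalue branch along a curve on the spectral surface:
if `M(e^{iξ(t)}) v(t) = e^{iζ(t)} v(t)` with `‖v(t)‖ = 1` along a differentiable curve,
then `ζ'(0) = ∑_l ⟨ξ'(0), j(l)⟩ |v_l(0)|²`. -/
theorem qrw_eigenvalue_branch_derivative (d c : ℕ) (hd : 1 ≤ d) (hc : 1 ≤ c)
    (U : Matrix (Fin c) (Fin c) ℂ) (hU : U ∈ Matrix.unitaryGroup (Fin c) ℂ)
    (j : Fin c → (Fin d → ℤ))
    (ε : ℝ) (hε : 0 < ε)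
    (ξ : ℝ → Fin d → ℝ) (ζ : ℝ → ℝ) (v : ℝ → Fin c → ℂ)
    (hξ : DifferentiableOn ℝ ξ (Set.Ioo (-ε) ε))
    (hζ : DifferentiableOn ℝ ζ (Set.Ioo (-ε) ε))
    (hv : DifferentiableOn ℝ v (Set.Ioo (-ε) ε))
    (hnorm : ∀ t ∈ Set.Ioo (-ε) ε, ∑ l : Fin c, ‖v t l‖ ^ 2 = 1)
    (heig : ∀ t ∈ Set.Ioo (-ε) ε,
      (Matrix.diagonal (fun l : Fin c =>
          ∏ m : Fin d, Complex.exp ((ξ t m : ℂ) * Complex.I) ^ j l m) * U).mulVec (v t) =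
        Complex.exp ((ζ t : ℂ) * Complex.I) • v t) :
    deriv ζ 0 =
      ∑ l : Fin c, (∑ m : Fin d, deriv ξ 0 m * (j l m : ℝ)) * ‖v 0 l‖ ^ 2 := by
  have h0 : (0:ℝ) ∈ Set.Ioo (-ε) ε := ⟨by linarith, hε⟩
  have hmem : Set.Ioo (-ε) ε ∈ nhds (0:ℝ) := isOpen_Ioo.mem_nhds h0
  have hξd : HasDerivAt ξ (deriv ξ 0) 0 := (hξ.differentiableAt hmem).hasDerivAt
  have hζd : HasDerivAt ζ (deriv ζ 0) 0 := (hζ.differentiableAt hmem).hasDerivAt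
  have hvd : HasDerivAt v (deriv v 0) 0 := (hv.differentiableAt hmem).hasDerivAt
  set w : Fin c → ℂ := deriv v 0 with hwdef
  have hξm : ∀ m : Fin d, HasDerivAt (fun t => ξ t m) (deriv ξ 0 m) 0 :=
    fun m => hasDerivAt_pi.mp hξd m
  have hvl : ∀ l : Fin c, HasDerivAt (fun t => v t l) (w l) 0 :=
    fun l => hasDerivAt_pi.mp hvd l
  set sig : ℝ → Fin c → ℝ := fun t l => ∑ m, ξ t m * (j l m : ℝ) with hsigdef
  set D : Fin c → ℝ := fun l => ∑ m, deriv ξ 0 m * (j l m : ℝ) with hDdef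
  have hsigl : ∀ l, HasDerivAt (fun t => sig t l) (D l) 0 := fun l =>
    HasDerivAt.fun_sum fun m _ => (hξm m).mul_const _
  -- products of exponentials collapse
  have hδ : ∀ (t : ℝ) (l : Fin c),
      (∏ m, Complex.exp ((ξ t m : ℂ) * Complex.I) ^ j l m)
        = Complex.exp ((sig t l : ℂ) * Complex.I) := by
    intro t l
    have h1 : ∀ m : Fin d, Complex.exp ((ξ t m : ℂ) * Complex.I) ^ j l m
        = Complex.exp ((j l m : ℂ) * ((ξ t m : ℂ) * Complex.I)) :=
      fun m => (Complex.exp_int_mul _ _).symm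
    simp_rw [h1, ← Complex.exp_sum]
    congr 1
    simp only [hsigdef]
    push_cast
    rw [Finset.sum_mul]
    exact Finset.sum_congr rfl fun m _ => by ring
  -- componentwise eigenvalue equation
  have heigc : ∀ t ∈ Set.Ioo (-ε) ε, ∀ l : Fin c,
      Complex.exp ((sig t l : ℂ) * Complex.I) * (∑ k, U l k * v t k)
        = Complex.exp ((ζ t : ℂ) * Complex.I) * v t l := by
    intro t ht l
    have h2 := congrFun (heig t ht) l
    simp only [Matrix.mulVec, dotProduct, Matrix.diagonal_mul, Pi.smul_apply,
      smul_eq_mul] at h2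
    rw [← hδ t l, Finset.mul_sum]
    rw [← h2]
    exact Finset.sum_congr rfl fun k _ => (mul_assoc _ _ _).symm
  set lam : ℂ := Complex.exp ((ζ 0 : ℂ) * Complex.I) with hlamdef
  have hlamne : lam ≠ 0 := Complex.exp_ne_zero _
  have hstar : ∀ x : ℝ, Complex.exp ((x:ℂ) * Complex.I)
      * star (Complex.exp ((x:ℂ) * Complex.I)) = 1 := by
    intro x
    rw [Complex.star_def, ← Complex.exp_conj, ← Complex.exp_add, map_mul,
      Complex.conj_ofReal, Complex.conj_I]
    rw [show (x:ℂ) * Complex.I + (x:ℂ) * (-Complex.I) = 0 by ring, Complex.exp_zero]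
  have hslam : star lam = lam⁻¹ :=
    eq_inv_of_mul_eq_one_left (by rw [mul_comm]; exact hstar (ζ 0))
  have hslaminv : star (lam⁻¹) = lam := by rw [← hslam, star_star]
  -- v t l * star (v t l) = |v t l|² as complex
  have h3 : ∀ (t : ℝ) (l : Fin c),
      v t l * star (v t l) = ((‖v t l‖ ^ 2 : ℝ) : ℂ) := by
    intro t l
    rw [Complex.star_def, Complex.mul_conj]
    norm_cast
    exact (Complex.sq_norm _).symm
  have hvz : ∀ t ∈ Set.Ioo (-ε) ε, (∑ l, v t l * star (v t l)) = 1 := by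
    intro t ht
    calc (∑ l, v t l * star (v t l))
        = ((∑ l, ‖v t l‖ ^ 2 : ℝ) : ℂ) := by
          rw [Complex.ofReal_sum]
          exact Finset.sum_congr rfl fun l _ => h3 t l
      _ = 1 := by rw [hnorm t ht]; norm_num
  -- two computations of the derivative of F
  have hF1 : HasDerivAt
      (fun t => ∑ l, Complex.exp ((sig t l : ℂ) * Complex.I)
        * (∑ k, U l k * v t k) * star (v t l))
      (lam * (((deriv ζ 0 : ℝ) : ℂ) * Complex.I)) 0 := by
    have hG : HasDerivAt (fun t => Complex.exp ((ζ t : ℂ) * Complex.I))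
        (lam * (((deriv ζ 0 : ℝ) : ℂ) * Complex.I)) 0 := by
      simpa [hlamdef] using (hζd.ofReal_comp.mul_const Complex.I).cexp
    refine hG.congr_of_eventuallyEq (Filter.eventuallyEq_of_mem hmem ?_)
    intro t ht
    calc (∑ l, Complex.exp ((sig t l : ℂ) * Complex.I)
          * (∑ k, U l k * v t k) * star (v t l))
        = ∑ l, Complex.exp ((ζ t : ℂ) * Complex.I) * (v t l * star (v t l)) := by
          refine Finset.sum_congr rfl fun l _ => ?_
          rw [heigc t ht l, mul_assoc]
      _ = Complex.exp ((ζ t : ℂ) * Complex.I) * ∑ l, v t l * star (v t l) := by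
          rw [Finset.mul_sum]
      _ = Complex.exp ((ζ t : ℂ) * Complex.I) := by rw [hvz t ht, mul_one]
  have hF2 : HasDerivAt
      (fun t => ∑ l, Complex.exp ((sig t l : ℂ) * Complex.I)
        * (∑ k, U l k * v t k) * star (v t l))
      (∑ l, ((Complex.exp ((sig 0 l : ℂ) * Complex.I) * ((D l : ℂ) * Complex.I)
          * (∑ k, U l k * v 0 k)
          + Complex.exp ((sig 0 l : ℂ) * Complex.I) * (∑ k, U l k * w k))
          * star (v 0 l)
        + Complex.exp ((sig 0 l : ℂ) * Complex.I) * (∑ k, U l k * v 0 k)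
          * star (w l))) 0 := by
    refine HasDerivAt.fun_sum fun l _ => ?_
    have hel : HasDerivAt (fun t => Complex.exp ((sig t l : ℂ) * Complex.I))
        (Complex.exp ((sig 0 l : ℂ) * Complex.I) * ((D l : ℂ) * Complex.I)) 0 :=
      ((hsigl l).ofReal_comp.mul_const Complex.I).cexp
    have hSl : HasDerivAt (fun t => ∑ k, U l k * v t k) (∑ k, U l k * w k) 0 :=
      HasDerivAt.fun_sum fun k _ => (hvl k).const_mul _
    have hcl : HasDerivAt (fun t => star (v t l)) (star (w l)) 0 := (hvl l).star
    exact (hel.mul hSl).mul hcl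
  have E := hF1.unique hF2
  -- unitarity: the adjoint eigen relation
  set A : Matrix (Fin c) (Fin c) ℂ :=
    Matrix.diagonal (fun l => Complex.exp ((sig 0 l : ℂ) * Complex.I)) * U with hAdef
  have hAv : A.mulVec (v 0) = lam • v 0 := by
    have h5 := heig 0 h0
    rw [show Matrix.diagonal (fun l : Fin c =>
        ∏ m, Complex.exp ((ξ 0 m : ℂ) * Complex.I) ^ j l m)
      = Matrix.diagonal (fun l => Complex.exp ((sig 0 l : ℂ) * Complex.I)) from
        congrArg _ (funext (hδ 0))] at h5
    exact h5
  have hDg : Matrix.diagonal (fun l : Fin c => Complex.exp ((sig 0 l : ℂ) * Complex.I))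
      ∈ Matrix.unitaryGroup (Fin c) ℂ := by
    rw [Matrix.mem_unitaryGroup_iff, Matrix.star_eq_conjTranspose,
      Matrix.diagonal_conjTranspose, Matrix.diagonal_mul_diagonal]
    rw [show (fun i : Fin c => Complex.exp ((sig 0 i : ℂ) * Complex.I)
        * (star fun l : Fin c => Complex.exp ((sig 0 l : ℂ) * Complex.I)) i)
      = fun _ => (1:ℂ) from funext fun i => by
        simpa using hstar (sig 0 i)]
    exact Matrix.diagonal_one
  have hAu : A ∈ Matrix.unitaryGroup (Fin c) ℂ := mul_mem hDg hU
  have hstarA : star A * A = 1 := (Unitary.mem_iff.mp hAu).1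
  have hadj : (star A).mulVec (v 0) = lam⁻¹ • v 0 := by
    have h4 : lam • (star A).mulVec (v 0) = v 0 := by
      rw [← Matrix.mulVec_smul, ← hAv, Matrix.mulVec_mulVec, hstarA, Matrix.one_mulVec]
    calc (star A).mulVec (v 0)
        = lam⁻¹ • (lam • (star A).mulVec (v 0)) := by
          rw [smul_smul, inv_mul_cancel₀ hlamne, one_smul]
      _ = lam⁻¹ • v 0 := by rw [h4]
  -- T computation
  have h5 : ∀ k : Fin c,
      (∑ l, Complex.exp ((sig 0 l : ℂ) * Complex.I) * U l k * star (v 0 l))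
        = lam * star (v 0 k) := by
    intro k
    have h6 : (∑ l, star (Complex.exp ((sig 0 l : ℂ) * Complex.I) * U l k) * v 0 l)
        = lam⁻¹ * v 0 k := by
      have h7 := congrFun hadj k
      simpa [Matrix.mulVec, dotProduct, Matrix.star_apply, hAdef,
        Matrix.diagonal_mul, Pi.smul_apply, smul_eq_mul] using h7
    calc (∑ l, Complex.exp ((sig 0 l : ℂ) * Complex.I) * U l k * star (v 0 l))
        = star (∑ l, star (Complex.exp ((sig 0 l : ℂ) * Complex.I) * U l k) * v 0 l) := by
          rw [star_sum]
          exact Finset.sum_congr rfl fun l _ => by rw [star_mul', star_star]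
      _ = star (lam⁻¹ * v 0 k) := by rw [h6]
      _ = lam * star (v 0 k) := by rw [star_mul', hslaminv, mul_comm]
  have hT : (∑ l, Complex.exp ((sig 0 l : ℂ) * Complex.I)
      * (∑ k, U l k * w k) * star (v 0 l))
      = lam * ∑ k, w k * star (v 0 k) := by
    calc (∑ l, Complex.exp ((sig 0 l : ℂ) * Complex.I)
          * (∑ k, U l k * w k) * star (v 0 l))
        = ∑ l, ∑ k, w k * (Complex.exp ((sig 0 l : ℂ) * Complex.I)
            * U l k * star (v 0 l)) := by
          refine Finset.sum_congr rfl fun l _ => ?_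
          rw [Finset.mul_sum, Finset.sum_mul]
          exact Finset.sum_congr rfl fun k _ => by ring
      _ = ∑ k, w k * ∑ l, (Complex.exp ((sig 0 l : ℂ) * Complex.I)
            * U l k * star (v 0 l)) := by
          rw [Finset.sum_comm]
          exact Finset.sum_congr rfl fun k _ => (Finset.mul_sum _ _ _).symm
      _ = ∑ k, w k * (lam * star (v 0 k)) := by
          exact Finset.sum_congr rfl fun k _ => by rw [h5 k]
      _ = lam * ∑ k, w k * star (v 0 k) := by
          rw [Finset.mul_sum]
          exact Finset.sum_congr rfl fun k _ => by ring
  -- norm is constant: derivative zero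
  have hN0 : (∑ l, (w l * star (v 0 l) + v 0 l * star (w l))) = 0 := by
    have hNd : HasDerivAt (fun t => ∑ l, v t l * star (v t l))
        (∑ l, (w l * star (v 0 l) + v 0 l * star (w l))) 0 :=
      HasDerivAt.fun_sum fun l _ => (hvl l).mul ((hvl l).star)
    have hNc : HasDerivAt (fun t => ∑ l, v t l * star (v t l)) 0 0 :=
      (hasDerivAt_const (0:ℝ) (1:ℂ)).congr_of_eventuallyEq
        (Filter.eventuallyEq_of_mem hmem hvz)
    exact hNd.unique hNc
  -- per-component relation at 0
  have ha : ∀ l : Fin c, Complex.exp ((sig 0 l : ℂ) * Complex.I)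
      * (∑ k, U l k * v 0 k) = lam * v 0 l := fun l => heigc 0 h0 l
  -- put it together
  have E2 : lam * (((deriv ζ 0 : ℝ) : ℂ) * Complex.I)
      = lam * Complex.I * (∑ l, (D l : ℂ) * (v 0 l * star (v 0 l))) := by
    calc lam * (((deriv ζ 0 : ℝ) : ℂ) * Complex.I)
        = ∑ l, ((Complex.exp ((sig 0 l : ℂ) * Complex.I) * ((D l : ℂ) * Complex.I)
            * (∑ k, U l k * v 0 k)
            + Complex.exp ((sig 0 l : ℂ) * Complex.I) * (∑ k, U l k * w k))
            * star (v 0 l)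
          + Complex.exp ((sig 0 l : ℂ) * Complex.I) * (∑ k, U l k * v 0 k)
            * star (w l)) := E
      _ = ∑ l, (lam * Complex.I * ((D l : ℂ) * (v 0 l * star (v 0 l)))
            + (Complex.exp ((sig 0 l : ℂ) * Complex.I) * (∑ k, U l k * w k)
              * star (v 0 l))
            + lam * (v 0 l * star (w l))) := by
          refine Finset.sum_congr rfl fun l _ => ?_
          have hal := ha l
          calc (Complex.exp ((sig 0 l : ℂ) * Complex.I) * ((D l : ℂ) * Complex.I)
                * (∑ k, U l k * v 0 k)
                + Complex.exp ((sig 0 l : ℂ) * Complex.I) * (∑ k, U l k * w k))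
                * star (v 0 l)
              + Complex.exp ((sig 0 l : ℂ) * Complex.I) * (∑ k, U l k * v 0 k)
                * star (w l)
              = ((D l : ℂ) * Complex.I)
                  * (Complex.exp ((sig 0 l : ℂ) * Complex.I) * (∑ k, U l k * v 0 k))
                  * star (v 0 l)
                + (Complex.exp ((sig 0 l : ℂ) * Complex.I) * (∑ k, U l k * w k)
                  * star (v 0 l))
                + (Complex.exp ((sig 0 l : ℂ) * Complex.I) * (∑ k, U l k * v 0 k))
                  * star (w l) := by ring
            _ = _ := by rw [hal]; ring
      _ = lam * Complex.I * (∑ l, (D l : ℂ) * (v 0 l * star (v 0 l)))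
          + ((∑ l, Complex.exp ((sig 0 l : ℂ) * Complex.I) * (∑ k, U l k * w k)
              * star (v 0 l))
            + lam * (∑ l, v 0 l * star (w l))) := by
          rw [Finset.sum_add_distrib, Finset.sum_add_distrib, Finset.mul_sum,
            Finset.mul_sum, add_assoc]
      _ = lam * Complex.I * (∑ l, (D l : ℂ) * (v 0 l * star (v 0 l)))
          + lam * (∑ l, (w l * star (v 0 l) + v 0 l * star (w l))) := by
          rw [hT, ← mul_add, ← Finset.sum_add_distrib]
      _ = lam * Complex.I * (∑ l, (D l : ℂ) * (v 0 l * star (v 0 l))) := by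
          rw [hN0, mul_zero, add_zero]
  have Efin : ((deriv ζ 0 : ℝ) : ℂ)
      = ∑ l, (D l : ℂ) * ((‖v 0 l‖ ^ 2 : ℝ) : ℂ) := by
    have h8 : lam * Complex.I * ((deriv ζ 0 : ℝ) : ℂ)
        = lam * Complex.I * (∑ l, (D l : ℂ) * (v 0 l * star (v 0 l))) := by
      rw [← E2]; ring
    have h9 := mul_left_cancel₀ (mul_ne_zero hlamne Complex.I_ne_zero) h8
    rw [h9]
    exact Finset.sum_congr rfl fun l _ => by rw [h3 0 l]
  have Efin2 : ((deriv ζ 0 : ℝ) : ℂ)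
      = ((∑ l, D l * ‖v 0 l‖ ^ 2 : ℝ) : ℂ) := by
    rw [Efin]; push_cast; ring
  exact_mod_cast Efin2

end
end

section
/- The Gauss map of the spectral surface is a convex combination of the jump vectors: let Ω ⊆ ℝ^d be open and let ζ : Ω → ℝ and v : Ω → ℂ^c be differentiable maps such that ‖v(ξ)‖ = 1 and M(e^{iξ}) v(ξ) = e^{iζ(ξ)} v(ξ) for all ξ ∈ Ω (where e^{iξ} denotes (e^{iξ_1}, …, e^{iξ_d})). Then for every ξ ∈ Ω the gradient satisfies ∇ζ(ξ) = Σ_{l∈Fin c} |v_l(ξ)|² · j(l); in particular, ∇ζ(ξ) lies in the convex hull conv{j(1), …, j(c)} of the jump vectors. -/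
noncomputable section

open Complex Finset Matrix

lemma qrw_adjoint_sum {c : ℕ} (M : Matrix (Fin c) (Fin c) ℂ) (hM : Mᴴ * M = 1)
    (w x : Fin c → ℂ) (e : ℂ) (he : e * (starRingEnd ℂ) e = 1)
    (hw : M.mulVec w = e • w) :
    ∑ l, M.mulVec x l * (starRingEnd ℂ) (w l) = e * ∑ l, x l * (starRingEnd ℂ) (w l) := by
  have hMw : Mᴴ.mulVec w = (starRingEnd ℂ) e • w := by
    have h1 : Mᴴ.mulVec (M.mulVec w) = w := by
      rw [Matrix.mulVec_mulVec, hM, Matrix.one_mulVec]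
    rw [hw, Matrix.mulVec_smul] at h1
    calc Mᴴ.mulVec w = (starRingEnd ℂ) e • (e • Mᴴ.mulVec w) := by
          rw [smul_smul, mul_comm ((starRingEnd ℂ) e) e, he, one_smul]
      _ = (starRingEnd ℂ) e • w := by rw [h1]
  have key : ∀ k, ∑ l, M l k * (starRingEnd ℂ) (w l) = e * (starRingEnd ℂ) (w k) := by
    intro k
    have h2 := congrFun hMw k
    simp only [Matrix.mulVec, dotProduct, Matrix.conjTranspose_apply,
      Pi.smul_apply, smul_eq_mul, RCLike.star_def] at h2
    calc ∑ l, M l k * (starRingEnd ℂ) (w l)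
        = (starRingEnd ℂ) (∑ l, (starRingEnd ℂ) (M l k) * w l) := by
          rw [map_sum]; congr 1; funext l; rw [map_mul (starRingEnd ℂ)]; simp
      _ = (starRingEnd ℂ) ((starRingEnd ℂ) e * w k) := by rw [h2]
      _ = e * (starRingEnd ℂ) (w k) := by simp [map_mul (starRingEnd ℂ)]
  calc ∑ l, M.mulVec x l * (starRingEnd ℂ) (w l)
      = ∑ l, ∑ k, x k * (M l k * (starRingEnd ℂ) (w l)) := by
        refine Finset.sum_congr rfl fun l _ => ?_
        simp only [Matrix.mulVec, dotProduct, Finset.sum_mul]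
        refine Finset.sum_congr rfl fun k _ => by ring
    _ = ∑ k, x k * ∑ l, M l k * (starRingEnd ℂ) (w l) := by
        rw [Finset.sum_comm]
        exact Finset.sum_congr rfl fun k _ => (Finset.mul_sum _ _ _).symm
    _ = ∑ k, x k * (e * (starRingEnd ℂ) (w k)) := by simp_rw [key]
    _ = e * ∑ k, x k * (starRingEnd ℂ) (w k) := by
        rw [Finset.mul_sum]; exact Finset.sum_congr rfl fun k _ => by ring

lemma qrw_prod_exp {d : ℕ} (y : Fin d → ℝ) (n : Fin d → ℤ) :
    ∏ m : Fin d, Complex.exp ((y m : ℂ) * Complex.I) ^ n m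
      = Complex.exp ((∑ m : Fin d, (n m : ℂ) * (y m : ℂ)) * Complex.I) := by
  rw [Finset.sum_mul, Complex.exp_sum]
  refine Finset.prod_congr rfl fun m _ => ?_
  rw [← Complex.exp_int_mul]
  ring_nf

lemma qrw_unitary {c : ℕ} (U : Matrix (Fin c) (Fin c) ℂ)
    (hU : U ∈ Matrix.unitaryGroup (Fin c) ℂ)
    (E : Fin c → ℂ) (hE : ∀ l, (starRingEnd ℂ) (E l) * E l = 1) :
    (Matrix.diagonal E * U)ᴴ * (Matrix.diagonal E * U) = 1 := by
  have hD : (Matrix.diagonal E)ᴴ * Matrix.diagonal E = 1 := by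
    rw [Matrix.diagonal_conjTranspose, Matrix.diagonal_mul_diagonal]
    have : (fun i => star E i * E i) = fun _ => (1 : ℂ) := by
      funext i
      simpa using hE i
    rw [this, Matrix.diagonal_one]
  have hUU : Uᴴ * U = 1 := by
    have := hU.1
    rwa [Matrix.star_eq_conjTranspose] at this
  calc (Matrix.diagonal E * U)ᴴ * (Matrix.diagonal E * U)
      = Uᴴ * ((Matrix.diagonal E)ᴴ * Matrix.diagonal E) * U := by
        rw [Matrix.conjTranspose_mul]; noncomm_ring
    _ = 1 := by rw [hD, mul_one, hUU]

/-- exp(r*I) times its conjugate is 1, for r with conj r = r. -/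
lemma qrw_exp_unit (r : ℂ) (hr : (starRingEnd ℂ) r = r) :
    Complex.exp (r * Complex.I) * (starRingEnd ℂ) (Complex.exp (r * Complex.I)) = 1 := by
  rw [← Complex.exp_conj, ← Complex.exp_add, map_mul (starRingEnd ℂ), hr, Complex.conj_I]
  rw [show r * Complex.I + r * -Complex.I = 0 from by ring, Complex.exp_zero]

/-- The Gauss map of the spectral surface is a convex combination of the jump vectors:
if `M(e^{iξ}) v(ξ) = e^{iζ(ξ)} v(ξ)` with `‖v(ξ)‖ = 1` on an open set `Ω`, then
`∇ζ(ξ) = ∑_l |v_l(ξ)|² j(l)`, which lies in the convex hull of the jump vectors. -/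
theorem qrw_gauss_map_convex_combination (d c : ℕ) (hd : 1 ≤ d) (hc : 1 ≤ c)
    (U : Matrix (Fin c) (Fin c) ℂ) (hU : U ∈ Matrix.unitaryGroup (Fin c) ℂ)
    (j : Fin c → (Fin d → ℤ))
    (Ω : Set (Fin d → ℝ)) (hΩ : IsOpen Ω)
    (ζ : (Fin d → ℝ) → ℝ) (v : (Fin d → ℝ) → Fin c → ℂ)
    (hζ : DifferentiableOn ℝ ζ Ω)
    (hv : DifferentiableOn ℝ v Ω)
    (hnorm : ∀ ξ ∈ Ω, ∑ l : Fin c, ‖v ξ l‖ ^ 2 = 1)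
    (heig : ∀ ξ ∈ Ω,
      (Matrix.diagonal (fun l : Fin c =>
          ∏ m : Fin d, Complex.exp ((ξ m : ℂ) * Complex.I) ^ j l m) * U).mulVec (v ξ) =
        Complex.exp ((ζ ξ : ℂ) * Complex.I) • v ξ) :
    ∀ ξ ∈ Ω,
      (fun m : Fin d => fderiv ℝ ζ ξ (Pi.single m 1)) =
        (∑ l : Fin c, ‖v ξ l‖ ^ 2 • fun m : Fin d => (j l m : ℝ)) ∧
      (fun m : Fin d => fderiv ℝ ζ ξ (Pi.single m 1)) ∈
        convexHull ℝ (Set.range fun l : Fin c => fun m : Fin d => (j l m : ℝ)) := by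
  intro ξ hξ
  -- componentwise eigenvalue equation, rewritten with exponentials
  have heig' : ∀ y ∈ Ω, ∀ l : Fin c,
      Complex.exp ((∑ m', (j l m' : ℂ) * (y m' : ℂ)) * Complex.I) * (U.mulVec (v y)) l
        = Complex.exp ((ζ y : ℂ) * Complex.I) * v y l := by
    intro y hy l
    have h1 := congrFun (heig y hy) l
    rw [← Matrix.mulVec_mulVec] at h1
    simpa [Matrix.mulVec_diagonal, qrw_prod_exp] using h1
  -- abbreviations at the base point
  set w : Fin c → ℂ := v ξ with hwdef
  set E : Fin c → ℂ :=
    fun l => Complex.exp ((∑ m', (j l m' : ℂ) * (ξ m' : ℂ)) * Complex.I) with hEdef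
  set e : ℂ := Complex.exp ((ζ ξ : ℂ) * Complex.I) with hedef
  have heE : ∀ l, (starRingEnd ℂ) (E l) * E l = 1 := by
    intro l
    have hr : (starRingEnd ℂ) (∑ m', (j l m' : ℂ) * (ξ m' : ℂ))
        = ∑ m', (j l m' : ℂ) * (ξ m' : ℂ) := by
      rw [map_sum]
      refine Finset.sum_congr rfl fun m' _ => ?_
      rw [map_mul (starRingEnd ℂ), Complex.conj_ofReal]
      simp
    rw [mul_comm]
    exact qrw_exp_unit _ hr
  have hee : e * (starRingEnd ℂ) e = 1 := qrw_exp_unit _ (Complex.conj_ofReal _)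
  have heigξ : ∀ l, E l * (U.mulVec w) l = e * w l := fun l => heig' ξ hξ l
  have hMeig : (Matrix.diagonal E * U).mulVec w = e • w := by
    have hprod : (fun l : Fin c =>
        ∏ m : Fin d, Complex.exp ((ξ m : ℂ) * Complex.I) ^ j l m) = E := by
      funext l; exact qrw_prod_exp ξ (j l)
    have := heig ξ hξ
    rwa [hprod] at this
  have hnorm1 : ∑ l, w l * (starRingEnd ℂ) (w l) = 1 := by
    have h1 : ∀ l, w l * (starRingEnd ℂ) (w l) = ((‖w l‖ ^ 2 : ℝ) : ℂ) := by
      intro l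
      rw [Complex.mul_conj, Complex.sq_norm]
    calc ∑ l, w l * (starRingEnd ℂ) (w l)
        = ((∑ l, ‖w l‖ ^ 2 : ℝ) : ℂ) := by
          rw [Complex.ofReal_sum]; exact Finset.sum_congr rfl fun l _ => h1 l
      _ = 1 := by rw [hnorm ξ hξ]; norm_num
  -- main derivative computation
  have hmain : ∀ m : Fin d, fderiv ℝ ζ ξ (Pi.single m 1)
      = ∑ l, ‖v ξ l‖ ^ 2 * (j l m : ℝ) := by
    intro m
    set h : Fin d → ℝ := Pi.single m 1 with hhdef
    set γ : ℝ → (Fin d → ℝ) := fun t => ξ + t • h with hγdef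
    have hγ0 : γ 0 = ξ := by simp [hγdef]
    have hγd : HasDerivAt γ h 0 := by
      have := (((hasDerivAt_id (0:ℝ)).smul_const h).const_add ξ); rw [one_smul] at this; exact this
    have hvξ : DifferentiableAt ℝ v ξ := hv.differentiableAt (hΩ.mem_nhds hξ)
    have hζξ : DifferentiableAt ℝ ζ ξ := hζ.differentiableAt (hΩ.mem_nhds hξ)
    set w' : Fin c → ℂ := fderiv ℝ v ξ h with hw'def
    set z' : ℝ := fderiv ℝ ζ ξ h with hz'def
    have hζγ : HasDerivAt (fun t => ζ (γ t)) z' 0 := by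
      have := HasFDerivAt.comp_hasDerivAt 0 (hγ0 ▸ hζξ.hasFDerivAt) hγd
      simpa [Function.comp_def, hγ0] using this
    have hvγ : ∀ l, HasDerivAt (fun t => v (γ t) l) (w' l) 0 := by
      have hp : HasDerivAt (fun t => v (γ t)) (fderiv ℝ v ξ h) 0 := by
        have := HasFDerivAt.comp_hasDerivAt 0 (hγ0 ▸ hvξ.hasFDerivAt) hγd
        simpa [Function.comp_def, hγ0] using this
      exact fun l => hasDerivAt_pi.1 hp l
    -- derivative of the exponential prefactor
    have hS : ∀ (l : Fin c) (t : ℝ),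
        (∑ m', (j l m' : ℂ) * ((γ t m' : ℝ) : ℂ)) * Complex.I
          = (∑ m', (j l m' : ℂ) * (ξ m' : ℂ)) * Complex.I + t • ((j l m : ℂ) * Complex.I) := by
      intro l t
      have hsum : ∑ m', (j l m' : ℂ) * ((γ t m' : ℝ) : ℂ)
          = (∑ m', (j l m' : ℂ) * (ξ m' : ℂ)) + (t : ℂ) * (j l m : ℂ) := by
        have : ∀ m', (j l m' : ℂ) * ((γ t m' : ℝ) : ℂ)
            = (j l m' : ℂ) * (ξ m' : ℂ)
              + (if m' = m then (t : ℂ) * (j l m' : ℂ) else 0) := by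
          intro m'
          simp only [hγdef, hhdef, Pi.add_apply, Pi.smul_apply, smul_eq_mul,
            Pi.single_apply]
          push_cast
          split <;> push_cast <;> ring
        rw [Finset.sum_congr rfl fun m' _ => this m', Finset.sum_add_distrib,
          Finset.sum_ite_eq' Finset.univ m (fun m' => (t : ℂ) * (j l m' : ℂ))]
        simp
      rw [hsum, Complex.real_smul]
      ring
    have hexpL : ∀ l, HasDerivAt
        (fun t => Complex.exp ((∑ m', (j l m' : ℂ) * ((γ t m' : ℝ) : ℂ)) * Complex.I))
        (E l * ((j l m : ℂ) * Complex.I)) 0 := by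
      intro l
      have heq : (fun t : ℝ =>
          Complex.exp ((∑ m', (j l m' : ℂ) * ((γ t m' : ℝ) : ℂ)) * Complex.I))
          = fun t : ℝ => Complex.exp ((∑ m', (j l m' : ℂ) * (ξ m' : ℂ)) * Complex.I
              + t • ((j l m : ℂ) * Complex.I)) := by
        funext t; rw [hS l t]
      rw [heq]
      have base : HasDerivAt (fun t : ℝ =>
          (∑ m', (j l m' : ℂ) * (ξ m' : ℂ)) * Complex.I + t • ((j l m : ℂ) * Complex.I))
          ((j l m : ℂ) * Complex.I) 0 := by
        simpa using (((hasDerivAt_id (0:ℝ)).smul_const ((j l m : ℂ) * Complex.I)).const_add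
          ((∑ m', (j l m' : ℂ) * (ξ m' : ℂ)) * Complex.I))
      have := base.cexp
      simpa [hEdef] using this
    have hUv : ∀ l, HasDerivAt (fun t => (U.mulVec (v (γ t))) l) ((U.mulVec w') l) 0 := by
      intro l
      simp only [Matrix.mulVec, dotProduct]
      exact HasDerivAt.fun_sum fun k _ => (hvγ k).const_mul (U l k)
    have hBd : HasDerivAt (fun t => Complex.exp ((ζ (γ t) : ℂ) * Complex.I))
        (e * ((z' : ℂ) * Complex.I)) 0 := by
      have h1 : HasDerivAt (fun t => ((ζ (γ t) : ℝ) : ℂ)) ((z' : ℝ) : ℂ) 0 :=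
        hζγ.ofReal_comp
      have h2 : HasDerivAt (fun t => ((ζ (γ t) : ℝ) : ℂ) * Complex.I)
          ((z' : ℂ) * Complex.I) 0 := h1.mul_const Complex.I
      have := h2.cexp
      simpa [hγ0, hedef] using this
    -- the function that vanishes identically near 0
    set G : ℝ → ℂ := fun t => ∑ l,
        (Complex.exp ((∑ m', (j l m' : ℂ) * ((γ t m' : ℝ) : ℂ)) * Complex.I)
            * (U.mulVec (v (γ t))) l
          - Complex.exp ((ζ (γ t) : ℂ) * Complex.I) * v (γ t) l)
        * (starRingEnd ℂ) (w l) with hGdef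
    have hGd : HasDerivAt G (∑ l,
        ((E l * ((j l m : ℂ) * Complex.I)) * (U.mulVec w) l + E l * (U.mulVec w') l
          - ((e * ((z' : ℂ) * Complex.I)) * w l + e * w' l)) * (starRingEnd ℂ) (w l)) 0 := by
      apply HasDerivAt.fun_sum
      intro l _
      have := (((hexpL l).mul (hUv l)).sub (hBd.mul (hvγ l))).mul_const ((starRingEnd ℂ) (w l))
      simpa [hγ0, hEdef, hedef, hwdef, mul_comm, mul_left_comm, add_comm] using this
    have hG0 : G =ᶠ[nhds (0:ℝ)] fun _ => 0 := by
      have hcont : Continuous γ := by fun_prop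
      have hmem : ∀ᶠ t in nhds (0:ℝ), γ t ∈ Ω := by
        have := hcont.continuousAt (x := (0:ℝ))
        exact this.preimage_mem_nhds (hγ0 ▸ hΩ.mem_nhds hξ)
      filter_upwards [hmem] with t ht
      simp only [hGdef]
      refine Finset.sum_eq_zero fun l _ => ?_
      rw [heig' (γ t) ht l, sub_self, zero_mul]
    have hzero : (∑ l,
        ((E l * ((j l m : ℂ) * Complex.I)) * (U.mulVec w) l + E l * (U.mulVec w') l
          - ((e * ((z' : ℂ) * Complex.I)) * w l + e * w' l)) * (starRingEnd ℂ) (w l)) = 0 :=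
      hGd.unique ((hasDerivAt_const (0:ℝ) (0:ℂ)).congr_of_eventuallyEq hG0)
    -- adjoint step
    have hadj : ∑ l, E l * (U.mulVec w') l * (starRingEnd ℂ) (w l)
        = e * ∑ l, w' l * (starRingEnd ℂ) (w l) := by
      have hdiag : ∀ l, (Matrix.diagonal E * U).mulVec w' l = E l * (U.mulVec w') l := by
        intro l
        rw [← Matrix.mulVec_mulVec, Matrix.mulVec_diagonal]
      have := qrw_adjoint_sum (Matrix.diagonal E * U) (qrw_unitary U hU E heE) w w' e hee hMeig
      calc ∑ l, E l * (U.mulVec w') l * (starRingEnd ℂ) (w l)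
          = ∑ l, (Matrix.diagonal E * U).mulVec w' l * (starRingEnd ℂ) (w l) := by
            exact Finset.sum_congr rfl fun l _ => by rw [hdiag l]
        _ = e * ∑ l, w' l * (starRingEnd ℂ) (w l) := this
    -- algebraic simplification of hzero
    have hexpand : ∀ l,
        ((E l * ((j l m : ℂ) * Complex.I)) * (U.mulVec w) l + E l * (U.mulVec w') l
          - ((e * ((z' : ℂ) * Complex.I)) * w l + e * w' l)) * (starRingEnd ℂ) (w l)
        = (j l m : ℂ) * Complex.I * e * (w l * (starRingEnd ℂ) (w l))
          + E l * (U.mulVec w') l * (starRingEnd ℂ) (w l)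
          - ((z' : ℂ) * Complex.I * e * (w l * (starRingEnd ℂ) (w l))
            + e * (w' l * (starRingEnd ℂ) (w l))) := by
      intro l
      have h1 := heigξ l
      linear_combination ((j l m : ℂ) * Complex.I * (starRingEnd ℂ) (w l)) * h1
    rw [Finset.sum_congr rfl fun l _ => hexpand l, Finset.sum_sub_distrib,
      Finset.sum_add_distrib, Finset.sum_add_distrib, hadj] at hzero
    have hs1 : ∑ l, (j l m : ℂ) * Complex.I * e * (w l * (starRingEnd ℂ) (w l))
        = Complex.I * e * ∑ l, (j l m : ℂ) * (w l * (starRingEnd ℂ) (w l))  := by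
      rw [Finset.mul_sum]; exact Finset.sum_congr rfl fun l _ => by ring
    have hs2 : ∑ l, (z' : ℂ) * Complex.I * e * (w l * (starRingEnd ℂ) (w l))
        = (z' : ℂ) * Complex.I * e := by
      rw [← Finset.mul_sum, hnorm1, mul_one]
    have hs3 : ∑ l, e * (w' l * (starRingEnd ℂ) (w l))
        = e * ∑ l, w' l * (starRingEnd ℂ) (w l) := by
      rw [Finset.mul_sum]
    rw [hs1, hs2, hs3] at hzero
    -- conclude: I * e * (Σ c_l |w_l|² - z') = 0
    have hie : Complex.I * e ≠ 0 := by
      simp [hedef, Complex.exp_ne_zero, Complex.I_ne_zero]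
    have hkey : (∑ l, (j l m : ℂ) * (w l * (starRingEnd ℂ) (w l))) = (z' : ℂ) := by
      have : Complex.I * e * ((∑ l, (j l m : ℂ) * (w l * (starRingEnd ℂ) (w l))) - (z' : ℂ))
          = 0 := by linear_combination hzero
      rcases mul_eq_zero.1 this with h | h
      · exact absurd h hie
      · exact sub_eq_zero.1 h
    have hcast : ((∑ l, ‖v ξ l‖ ^ 2 * (j l m : ℝ) : ℝ) : ℂ) = (z' : ℂ) := by
      rw [← hkey, Complex.ofReal_sum]
      refine Finset.sum_congr rfl fun l _ => ?_
      rw [Complex.mul_conj, ← Complex.sq_norm]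
      push_cast
      ring
    exact_mod_cast hcast.symm
  constructor
  · funext m
    rw [hmain m]
    simp only [Finset.sum_apply, Pi.smul_apply, smul_eq_mul]
    rfl
  · have hpt : (fun m => fderiv ℝ ζ ξ (Pi.single m 1))
        = Finset.univ.centerMass (fun l => ‖v ξ l‖ ^ 2)
          (fun l => fun m : Fin d => (j l m : ℝ)) := by
      rw [Finset.centerMass, hnorm ξ hξ, inv_one, one_smul]
      funext m
      rw [hmain m]
      simp only [Finset.sum_apply, Pi.smul_apply, smul_eq_mul]
    rw [hpt]
    exact Finset.centerMass_mem_convexHull _ (fun l _ => by positivity)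
      (by rw [hnorm ξ hξ]; norm_num) (fun l _ => Set.mem_range_self l)

end
end

section
/- Factorization of the spectral surface of the standard 2-dimensional Hadamard walk: let U be the 4×4 matrix U = I − (1/2)·O, where O is the 4×4 all-ones matrix, let the jump vectors be j(1) = (0,0), j(2) = (0,1), j(3) = (1,0), j(4) = (1,1) in ℤ², and for x, y ∈ ℂ let M(x,y) = Δ(x,y)·U where Δ(x,y) = diag(1, y, x, xy). Then for all x, y, z ∈ ℂ: det(z·I − M(x,y)) = (1/2)·(−2xy + z + xz + yz + xyz − 2z²)·(xy − z²). -/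
noncomputable section

lemma matrix_eq (x y z : ℂ) :
    z • (1 : Matrix (Fin 4) (Fin 4) ℂ) -
        Matrix.diagonal ![1, y, x, x * y] *
          ((1 : Matrix (Fin 4) (Fin 4) ℂ) -
            (1 / 2 : ℂ) • Matrix.of fun _ _ : Fin 4 => (1 : ℂ)) =
    !![z - 1/2, 1/2, 1/2, 1/2;
       y/2, z - y/2, y/2, y/2;
       x/2, x/2, z - x/2, x/2;
       x*y/2, x*y/2, x*y/2, z - x*y/2] := by
  ext i j
  fin_cases i <;> fin_cases j <;>
    simp [Matrix.mul_apply, Matrix.one_apply, Fin.sum_univ_four, Matrix.diagonal] <;> ring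

/-- Factorization of the spectral surface of the standard two-dimensional Hadamard
(Grover) walk: with `U = I − (1/2)·O` and `M(x,y) = diag(1, y, x, xy)·U`,
`det(z·I − M(x,y)) = (1/2)(−2xy + z + xz + yz + xyz − 2z²)(xy − z²)`. -/
theorem hadamard_walk_spectral_surface_factorization (x y z : ℂ) :
    Matrix.det (z • (1 : Matrix (Fin 4) (Fin 4) ℂ) -
        Matrix.diagonal ![1, y, x, x * y] *
          ((1 : Matrix (Fin 4) (Fin 4) ℂ) -
            (1 / 2 : ℂ) • Matrix.of fun _ _ : Fin 4 => (1 : ℂ))) =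
      (1 / 2 : ℂ) * (-2 * x * y + z + x * z + y * z + x * y * z - 2 * z ^ 2) *
        (x * y - z ^ 2) := by
  rw [matrix_eq, Matrix.det_succ_row_zero]
  simp [Fin.sum_univ_succ, Matrix.det_fin_three, Matrix.submatrix, Fin.succAbove,
    show ((1:Fin 4) < Fin.succ 2) = True from by decide,
    show (Fin.castSucc 2 : Fin 4) = 2 from rfl,
    show ((2:Fin 4) < Fin.succ 2) = True from by decide, show (Fin.succ 2 : Fin 4) = 3 from rfl]
  ring
end
end

section
/- The spectral surface of the standard 2-dimensional Hadamard walk contains the monomial torus {xy = z²}: with U = I − (1/2)·O (O the 4×4 all-ones matrix), jump vectors j(1) = (0,0), j(2) = (0,1), j(3) = (1,0), j(4) = (1,1), and M(x,y) = diag(1, y, x, xy)·U, for all x, y, z ∈ ℂ with xy = z² one has det(z·I − M(x,y)) = 0. -/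
noncomputable section

set_option maxHeartbeats 1000000 in
lemma my_det_fin_four (M : Matrix (Fin 4) (Fin 4) ℂ) :
    M.det =
      M 0 0 * (M 1 1 * (M 2 2 * M 3 3 - M 2 3 * M 3 2) - M 1 2 * (M 2 1 * M 3 3 - M 2 3 * M 3 1)
        + M 1 3 * (M 2 1 * M 3 2 - M 2 2 * M 3 1))
      - M 0 1 * (M 1 0 * (M 2 2 * M 3 3 - M 2 3 * M 3 2) - M 1 2 * (M 2 0 * M 3 3 - M 2 3 * M 3 0)
        + M 1 3 * (M 2 0 * M 3 2 - M 2 2 * M 3 0))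
      + M 0 2 * (M 1 0 * (M 2 1 * M 3 3 - M 2 3 * M 3 1) - M 1 1 * (M 2 0 * M 3 3 - M 2 3 * M 3 0)
        + M 1 3 * (M 2 0 * M 3 1 - M 2 1 * M 3 0))
      - M 0 3 * (M 1 0 * (M 2 1 * M 3 2 - M 2 2 * M 3 1) - M 1 1 * (M 2 0 * M 3 2 - M 2 2 * M 3 0)
        + M 1 2 * (M 2 0 * M 3 1 - M 2 1 * M 3 0)) := by
  rw [Matrix.det_succ_row_zero, Fin.sum_univ_four]
  simp (config := { decide := true }) [Matrix.det_fin_three, Matrix.submatrix, Fin.succAbove,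
    show (Fin.succ 2 : Fin 4) = 3 from rfl, show ((2 : Fin 3).castSucc : Fin 4) = 2 from rfl]
  ring

set_option maxHeartbeats 1000000 in

/-- The spectral surface of the standard two-dimensional Hadamard (Grover) walk contains
the monomial torus `{xy = z²}`: with `U = I − (1/2)·O` and `M(x,y) = diag(1, y, x, xy)·U`,
`xy = z²` implies `det(z·I − M(x,y)) = 0`. -/
theorem hadamard_walk_monomial_torus (x y z : ℂ) (h : x * y = z ^ 2) :
    Matrix.det (z • (1 : Matrix (Fin 4) (Fin 4) ℂ) -
        Matrix.diagonal ![1, y, x, x * y] *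
          ((1 : Matrix (Fin 4) (Fin 4) ℂ) -
            (1 / 2 : ℂ) • Matrix.of fun _ _ : Fin 4 => (1 : ℂ))) = 0 := by
  have hB : (z • (1 : Matrix (Fin 4) (Fin 4) ℂ) -
        Matrix.diagonal ![1, y, x, x * y] *
          ((1 : Matrix (Fin 4) (Fin 4) ℂ) -
            (1 / 2 : ℂ) • Matrix.of fun _ _ : Fin 4 => (1 : ℂ))) =
      !![z - 1/2, 1/2, 1/2, 1/2;
         y/2, z - y/2, y/2, y/2;
         x/2, x/2, z - x/2, x/2;
         x*y/2, x*y/2, x*y/2, z - x*y/2] := by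
    ext i j
    fin_cases i <;> fin_cases j <;>
      simp [Matrix.mul_apply, Fin.sum_univ_four, Matrix.one_apply] <;> ring
  rw [hB, my_det_fin_four]
  simp only [Matrix.cons_val', Matrix.cons_val_zero, Matrix.cons_val_one, Matrix.head_cons,
    Matrix.empty_val', Matrix.cons_val_fin_one, Matrix.head_fin_const, Matrix.cons_val_two,
    Matrix.tail_cons, Matrix.cons_val_three, Matrix.head_fin_const, Matrix.of_apply]
  linear_combination (-(z^2 + x*y - z*(1+x)*(1+y)/2)) * h

end
end

section
/- Strong localization implies weak localization: fix a unit vector u ∈ ℂ^c and suppose the rescaled probability measures π_T^u converge weakly, as T → ∞, to a probability measure π on ℝ^d. If there exist times T_n → ∞, sites k_n ∈ ℤ^d and chiralities v_n ∈ Fin c such that k_n / T_n → s ∈ ℝ^d and liminf_n |⟨δ_{(k_n, v_n)}, S^{T_n}(Σ_i u_i δ_{(0,i)})⟩|² ≥ c₀ for some c₀ > 0, then π({s}) ≥ c₀; in particular π has an atom at s. -/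
open scoped InnerProductSpace BoundedContinuousFunction
open MeasureTheory Filter

noncomputable section

/-- The rescaled position measure `π_T^u = ∑_k p_T^u(k) δ_{k/T}` of the walk `S`
started in the state `ψ = ∑_i u_i δ_{(0,i)}`. -/
noncomputable def QRW.positionMeasure {d c : ℕ} (S : QRW.Space d c →L[ℂ] QRW.Space d c)
    (ψ : QRW.Space d c) (T : ℕ) : Measure (Fin d → ℝ) :=
  Measure.sum fun k : Fin d → ℤ =>
    ENNReal.ofReal (∑ v : Fin c, ‖⟪QRW.delta k v, (S ^ T) ψ⟫_ℂ‖ ^ 2) •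
      Measure.dirac fun m => (k m : ℝ) / (T : ℝ)

lemma qrw_integral_ge {d c : ℕ} (S : QRW.Space d c →L[ℂ] QRW.Space d c)
    (ψ : QRW.Space d c) (T : ℕ) (f : (Fin d → ℝ) → ℝ) (hf : Continuous f)
    (hf0 : ∀ x, 0 ≤ f x) (hf1 : ∀ x, f x ≤ 1)
    (hfin : QRW.positionMeasure S ψ T Set.univ ≠ ⊤)
    (k : Fin d → ℤ) (v : Fin c) :
    ‖⟪QRW.delta k v, (S ^ T) ψ⟫_ℂ‖ ^ 2 * f (fun m => (k m : ℝ) / (T : ℝ))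
      ≤ ∫ ρ, f ρ ∂(QRW.positionMeasure S ψ T) := by
  set μ := QRW.positionMeasure S ψ T with hμ
  have hmeas : Measurable fun x => ENNReal.ofReal (f x) :=
    ENNReal.measurable_ofReal.comp hf.measurable
  set I := ∫⁻ x, ENNReal.ofReal (f x) ∂μ with hI
  have hIle : I ≤ μ Set.univ := by
    calc I ≤ ∫⁻ _, 1 ∂μ :=
          lintegral_mono fun x => ENNReal.ofReal_le_one.2 (hf1 x)
      _ = μ Set.univ := lintegral_one
  have hIne : I ≠ ⊤ := fun h => hfin (top_le_iff.1 (h ▸ hIle))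
  have hint : ∫ ρ, f ρ ∂μ = I.toReal :=
    integral_eq_lintegral_of_nonneg_ae (Eventually.of_forall hf0)
      hf.aestronglyMeasurable
  set w : ENNReal := ENNReal.ofReal (∑ v' : Fin c, ‖⟪QRW.delta k v', (S ^ T) ψ⟫_ℂ‖ ^ 2)
  have hterm : w * ENNReal.ofReal (f (fun m => (k m : ℝ) / (T : ℝ))) ≤ I := by
    rw [hI, hμ, QRW.positionMeasure, lintegral_sum_measure]
    refine le_trans (le_of_eq ?_) (ENNReal.le_tsum k)
    rw [lintegral_smul_measure, lintegral_dirac' _ hmeas]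
    rfl
  have h1 : (w * ENNReal.ofReal (f (fun m => (k m : ℝ) / (T : ℝ)))).toReal
      = (∑ v' : Fin c, ‖⟪QRW.delta k v', (S ^ T) ψ⟫_ℂ‖ ^ 2)
        * f (fun m => (k m : ℝ) / (T : ℝ)) := by
    rw [ENNReal.toReal_mul, ENNReal.toReal_ofReal, ENNReal.toReal_ofReal (hf0 _)]
    positivity
  have h2 : ‖⟪QRW.delta k v, (S ^ T) ψ⟫_ℂ‖ ^ 2
      ≤ ∑ v' : Fin c, ‖⟪QRW.delta k v', (S ^ T) ψ⟫_ℂ‖ ^ 2 :=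
    Finset.single_le_sum (f := fun v' => ‖⟪QRW.delta k v', (S ^ T) ψ⟫_ℂ‖ ^ 2)
      (fun i _ => by positivity) (Finset.mem_univ v)
  calc ‖⟪QRW.delta k v, (S ^ T) ψ⟫_ℂ‖ ^ 2 * f (fun m => (k m : ℝ) / (T : ℝ))
      ≤ (∑ v' : Fin c, ‖⟪QRW.delta k v', (S ^ T) ψ⟫_ℂ‖ ^ 2)
        * f (fun m => (k m : ℝ) / (T : ℝ)) :=
        mul_le_mul_of_nonneg_right h2 (hf0 _)
    _ = (w * ENNReal.ofReal (f (fun m => (k m : ℝ) / (T : ℝ)))).toReal := h1.symm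
    _ ≤ I.toReal := ENNReal.toReal_mono hIne hterm
    _ = ∫ ρ, f ρ ∂μ := hint.symm


/-- Strong localization implies weak localization: if the rescaled position measures
`π_T^u` converge weakly to a probability measure `π`, and along times `T_n → ∞` the
probabilities at sites `k_n` with `k_n/T_n → s` have `liminf ≥ c₀ > 0`,
then `π` has an atom of mass at least `c₀` at `s`. -/
theorem qrw_strong_localization_implies_weak (d c : ℕ) (hd : 1 ≤ d) (hc : 1 ≤ c)
    (U : Matrix (Fin c) (Fin c) ℂ) (hU : U ∈ Matrix.unitaryGroup (Fin c) ℂ)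
    (j : Fin c → (Fin d → ℤ))
    (S₁ S₂ : QRW.Space d c →L[ℂ] QRW.Space d c)
    (hS₁ : ∀ (k : Fin d → ℤ) (i : Fin c),
      S₁ (QRW.delta k i) = ∑ i' : Fin c, U i' i • QRW.delta k i')
    (hS₂ : ∀ (k : Fin d → ℤ) (i : Fin c),
      S₂ (QRW.delta k i) = QRW.delta (k + j i) i)
    (u : EuclideanSpace ℂ (Fin c)) (hu : ‖u‖ = 1)
    (ψ : QRW.Space d c) (hψ : ψ = ∑ i : Fin c, u i • QRW.delta (0 : Fin d → ℤ) i)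
    (π : Measure (Fin d → ℝ)) (hπ : IsProbabilityMeasure π)
    (hweak : ∀ f : (Fin d → ℝ) →ᵇ ℝ,
      Tendsto (fun T : ℕ => ∫ ρ, f ρ ∂(QRW.positionMeasure (S₂ ∘L S₁) ψ T)) atTop
        (nhds (∫ ρ, f ρ ∂π)))
    (Tn : ℕ → ℕ) (hTn : Tendsto Tn atTop atTop)
    (kn : ℕ → Fin d → ℤ) (vn : ℕ → Fin c) (s : Fin d → ℝ)
    (hs : Tendsto (fun n => fun m => (kn n m : ℝ) / (Tn n : ℝ)) atTop (nhds s))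
    (c₀ : ℝ) (hc₀ : 0 < c₀)
    (hlim : c₀ ≤ liminf
      (fun n => ‖⟪QRW.delta (kn n) (vn n), ((S₂ ∘L S₁) ^ Tn n) ψ⟫_ℂ‖ ^ 2) atTop) :
    ENNReal.ofReal c₀ ≤ π {s} := by
  -- eventual finiteness of the position measures along `Tn`
  have hmass : Tendsto
      (fun T => (QRW.positionMeasure (S₂ ∘L S₁) ψ T Set.univ).toReal) atTop (nhds 1) := by
    have h := hweak (BoundedContinuousFunction.const _ (1 : ℝ))
    simpa [integral_const, measure_univ, Measure.real] using h
  have hfin : ∀ᶠ n in atTop,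
      QRW.positionMeasure (S₂ ∘L S₁) ψ (Tn n) Set.univ ≠ ⊤ := by
    have h := (hmass.comp hTn).eventually (eventually_gt_nhds (by norm_num : (0:ℝ) < 1))
    filter_upwards [h] with n hn htop
    simp only [Function.comp_apply, htop, ENNReal.toReal_top] at hn
    exact lt_irrefl _ hn
  -- main claim: every closed ball around s has mass at least c₀
  have hball : ∀ ε : ℝ, 0 < ε → ENNReal.ofReal c₀ ≤ π (Metric.closedBall s ε) := by
    intro ε hε
    set f : (Fin d → ℝ) → ℝ := fun x => max 0 (1 - dist x s / ε) with hfdef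
    have hfc : Continuous f :=
      continuous_const.max (continuous_const.sub
        ((continuous_id.dist continuous_const).div_const ε))
    have hf0 : ∀ x, 0 ≤ f x := fun x => le_max_left _ _
    have hf1 : ∀ x, f x ≤ 1 := by
      intro x
      have : 0 ≤ dist x s / ε := div_nonneg dist_nonneg hε.le
      exact max_le (by norm_num) (by linarith)
    set F : (Fin d → ℝ) →ᵇ ℝ := BoundedContinuousFunction.ofNormedAddCommGroup f hfc 1
      (fun x => by rw [Real.norm_eq_abs, abs_le]; exact ⟨by linarith [hf0 x], hf1 x⟩) with hFdef
    have hFcoe : ∀ x, F x = f x := fun x => rfl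
    have hconv : Tendsto
        (fun n => ∫ ρ, F ρ ∂(QRW.positionMeasure (S₂ ∘L S₁) ψ (Tn n))) atTop
        (nhds (∫ ρ, F ρ ∂π)) := (hweak F).comp hTn
    have hδ : ∀ δ ∈ Set.Ioo (0:ℝ) 1, (c₀ - δ) * (1 - δ) ≤ ∫ ρ, F ρ ∂π := by
      rintro δ ⟨hδ0, hδ1⟩
      have hfs : f s = 1 := by simp [hfdef, hε.le]
      have hptf : Tendsto (fun n => f (fun m => (kn n m : ℝ) / (Tn n : ℝ))) atTop (nhds 1) := by
        simpa [hfs, Function.comp_def] using (hfc.tendsto s).comp hs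
      have hEa : ∀ᶠ n in atTop, 1 - δ < f (fun m => (kn n m : ℝ) / (Tn n : ℝ)) :=
        hptf.eventually (eventually_gt_nhds (by linarith))
      have hEb : ∀ᶠ n in atTop,
          c₀ - δ < ‖⟪QRW.delta (kn n) (vn n), ((S₂ ∘L S₁) ^ Tn n) ψ⟫_ℂ‖ ^ 2 :=
        eventually_lt_of_lt_liminf (lt_of_lt_of_le (by linarith) hlim)
          (isBoundedUnder_of ⟨0, fun n => by positivity⟩)
      refine ge_of_tendsto hconv ?_
      filter_upwards [hEa, hEb, hfin] with n ha hb hfi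
      have key := qrw_integral_ge (S₂ ∘L S₁) ψ (Tn n) f hfc hf0 hf1 hfi (kn n) (vn n)
      have : (c₀ - δ) * (1 - δ)
          ≤ ‖⟪QRW.delta (kn n) (vn n), ((S₂ ∘L S₁) ^ Tn n) ψ⟫_ℂ‖ ^ 2
            * f (fun m => (kn n m : ℝ) / (Tn n : ℝ)) :=
        mul_le_mul hb.le ha.le (by linarith) (by positivity)
      calc (c₀ - δ) * (1 - δ)
          ≤ _ := this
        _ ≤ ∫ ρ, f ρ ∂(QRW.positionMeasure (S₂ ∘L S₁) ψ (Tn n)) := key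
        _ = ∫ ρ, F ρ ∂(QRW.positionMeasure (S₂ ∘L S₁) ψ (Tn n)) := rfl
    have h1 : c₀ ≤ ∫ ρ, F ρ ∂π := by
      have htend : Tendsto (fun δ : ℝ => (c₀ - δ) * (1 - δ)) (nhdsWithin 0 (Set.Ioi 0))
          (nhds c₀) := by
        have h0 : Tendsto (fun δ : ℝ => (c₀ - δ) * (1 - δ)) (nhds 0)
            (nhds ((c₀ - 0) * (1 - 0))) :=
          ((tendsto_const_nhds.sub tendsto_id)).mul (tendsto_const_nhds.sub tendsto_id)
        simpa using h0.mono_left nhdsWithin_le_nhds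
      exact le_of_tendsto htend
        (eventually_of_mem (Ioo_mem_nhdsGT zero_lt_one) hδ)
    have h2 : ∫ ρ, F ρ ∂π ≤ (π (Metric.closedBall s ε)).toReal := by
      have hint1 : Integrable (⇑F) π := F.integrable π
      have hint2 : Integrable
          (Set.indicator (Metric.closedBall s ε) (fun _ => (1:ℝ))) π :=
        (integrable_const 1).indicator measurableSet_closedBall
      have hle : ∀ x, F x ≤ Set.indicator (Metric.closedBall s ε) (fun _ => (1:ℝ)) x := by
        intro x
        by_cases hx : x ∈ Metric.closedBall s ε
        · rw [Set.indicator_of_mem hx]; exact hf1 x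
        · rw [Set.indicator_of_notMem hx]
          have hd : ε < dist x s := lt_of_not_ge (by simpa [Metric.mem_closedBall] using hx)
          have hf0' : f x = 0 := max_eq_left (by
            rw [sub_nonpos, le_div_iff₀ hε]; linarith)
          rw [hFcoe, hf0']
      calc ∫ ρ, F ρ ∂π
          ≤ ∫ ρ, Set.indicator (Metric.closedBall s ε) (fun _ => (1:ℝ)) ρ ∂π :=
            integral_mono hint1 hint2 hle
        _ = (π (Metric.closedBall s ε)).toReal := by
            rw [integral_indicator_const (1:ℝ) measurableSet_closedBall]
            simp [Measure.real]
    exact ENNReal.ofReal_le_of_le_toReal (h1.trans h2)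
  -- conclude via continuity from above
  have hA : Tendsto (fun m : ℕ => π (Metric.closedBall s (1 / (m + 1)))) atTop
      (nhds (π (⋂ m : ℕ, Metric.closedBall s (1 / (m + 1))))) := by
    have := tendsto_measure_iInter_atTop (μ := π)
      (s := fun m : ℕ => Metric.closedBall s (1 / (m + 1)))
      (fun m => measurableSet_closedBall.nullMeasurableSet)
      (fun a b hab => Metric.closedBall_subset_closedBall
        (one_div_le_one_div_of_le (by positivity)
          (by have := (Nat.cast_le (α := ℝ)).2 hab; linarith)))
      ⟨0, measure_ne_top π _⟩
    exact this
  have hiInter : (⋂ m : ℕ, Metric.closedBall s (1 / (m + 1) : ℝ)) = {s} := by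
    ext x
    simp only [Set.mem_iInter, Metric.mem_closedBall, Set.mem_singleton_iff]
    constructor
    · intro h
      have hle : dist x s ≤ 0 :=
        ge_of_tendsto' tendsto_one_div_add_atTop_nhds_zero_nat (fun m => h m)
      exact dist_le_zero.mp hle
    · rintro rfl m
      simp only [dist_self]
      positivity
  rw [← hiInter]
  exact ge_of_tendsto hA (Eventually.of_forall fun m => hball _ (by positivity))

end
end
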